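/- Let K be an algebraically closed field of characteristic zero and let B be an integrally closed integral domain which is a finitely generated K-algebra possessing a unit that does not lie in the image of K under the structure map. Then there exist an integer n ≥ 2 and a unit f of B such that the B-algebra B[T]/(Tⁿ − f) is an integral domain, is finite as a B-module, and is étale over B (of finite type and formally étale). -/

import Mathlib

/-!
A nonconstant unit `u` of `B` is transcendental over the algebraically closed field `K`.
Extending `u` to a transcendence basis of `Frac B` makes it a variable of a purely transcendental
subfield `M` over which `Frac B` is finite. A variable has no `p`-th root in `M`, so for a prime
`p > [Frac B : M]` the polynomial `Tᵖ - u` stays irreducible over `Frac B`. Then `B[T]/(Tᵖ - u)`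
embeds into the field `Frac B[T]/(Tᵖ - u)`, is free of rank `p` over `B`, and is étale since
`p` and `u` are invertible in `B`.
-/

open Polynomial

theorem IsAlgClosed.transcendental_of_forall_algebraMap_ne {K A : Type*} [Field K] [IsAlgClosed K]
    [CommRing A] [IsDomain A] [Algebra K A] {a : A} (ha : ∀ c : K, algebraMap K A c ≠ a) :
    Transcendental K a := by
  intro halg
  have hdeg := IsAlgClosed.degree_eq_one_of_irreducible K (minpoly.irreducible halg.isIntegral)
  obtain ⟨c, hc⟩ := minpoly.degree_eq_one_iff.mp hdeg
  exact ha c hc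

theorem Irreducible.pow_ne_algebraMap {R L : Type*} [CommRing R] [IsDomain R]
    [IsIntegrallyClosed R] [Field L] [Algebra R L] [IsFractionRing R L] {q : R}
    (hq : Irreducible q) {n : ℕ} (hn : n ≠ 1) (x : L) : x ^ n ≠ algebraMap R L q := by
  intro hx
  rcases n.eq_zero_or_pos with rfl | hn0
  · rw [pow_zero, ← map_one (algebraMap R L), (IsFractionRing.injective R L).eq_iff] at hx
    exact hq.not_isUnit (hx ▸ isUnit_one)
  obtain ⟨r, rfl⟩ := IsIntegrallyClosed.exists_algebraMap_eq_of_isIntegral_pow hn0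
    (hx ▸ isIntegral_algebraMap)
  rw [← map_pow, (IsFractionRing.injective R L).eq_iff] at hx
  exact not_irreducible_pow hn (hx ▸ hq)

theorem AlgebraicIndependent.pow_ne_of_mem_adjoin {ι K F : Type*} [Field K] [Field F]
    [Algebra K F] {x : ι → F} (hx : AlgebraicIndependent K x) (i : ι) {n : ℕ} (hn : n ≠ 1)
    {c : F} (hc : c ∈ IntermediateField.adjoin K (Set.range x)) : c ^ n ≠ x i := by
  intro hci
  set e := hx.aevalEquivField
  have hxi : x i = e (algebraMap (MvPolynomial ι K) (FractionRing (MvPolynomial ι K))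
      (MvPolynomial.X i)) := by
    rw [hx.aevalEquivField_algebraMap_apply_coe, MvPolynomial.aeval_X]
  have hc' : c = e (e.symm ⟨c, hc⟩) := by simp
  refine (MvPolynomial.X_prime (R := K) (i := i)).irreducible.pow_ne_algebraMap hn
    (e.symm ⟨c, hc⟩) (e.injective ?_)
  apply Subtype.ext
  rw [map_pow, IntermediateField.coe_pow, ← hc', ← hxi, hci]

theorem Transcendental.exists_forall_prime_pow_ne {K F : Type*} [Field K] [Field F] [Algebra K F]
    [Algebra.EssFiniteType K F] {v : F} (hv : Transcendental K v) :
    ∃ N : ℕ, ∀ p : ℕ, p.Prime → N < p → ∀ b : F, b ^ p ≠ v := by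
  obtain ⟨t, hvt, ht⟩ := exists_isTranscendenceBasis_superset (R := K)
    ((algebraicIndependent_singleton_iff (⟨v, rfl⟩ : ({v} : Set F))).mpr hv :
      AlgebraicIndepOn K id {v})
  let M := IntermediateField.adjoin K (Set.range ((↑) : t → F))
  have hvM : v ∈ M := IntermediateField.subset_adjoin K _ ⟨⟨v, hvt rfl⟩, rfl⟩
  have := ht.isAlgebraic_field
  have : Algebra.EssFiniteType M F := .of_comp K M F
  have : Module.Finite M F := Algebra.finite_of_essFiniteType_of_isAlgebraic
  refine ⟨Module.finrank M F, fun p hp hpN b hb => ?_⟩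
  have hirr : Irreducible (X ^ p - C (⟨v, hvM⟩ : M)) :=
    X_pow_sub_C_irreducible_of_prime hp fun c hc =>
      ht.1.pow_ne_of_mem_adjoin ⟨v, hvt rfl⟩ hp.one_lt.ne' c.2 (congrArg Subtype.val hc)
  have hmin : minpoly M b = X ^ p - C ⟨v, hvM⟩ :=
    (minpoly.eq_of_irreducible_of_monic hirr (by simp [hb]) (monic_X_pow_sub_C _ hp.ne_zero)).symm
  have hdeg := minpoly.natDegree_le (A := M) b
  rw [hmin, natDegree_X_pow_sub_C] at hdeg
  omega

theorem AdjoinRoot.isDomain_of_irreducible_map {R L : Type*} [CommRing R] [Field L] [Algebra R L]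
    (hRL : Function.Injective (algebraMap R L)) {g : R[X]} (hg : g.Monic)
    (hirr : Irreducible (g.map (algebraMap R L))) : IsDomain (AdjoinRoot g) := by
  have := Fact.mk hirr
  refine Function.Injective.isDomain (AdjoinRoot.map (algebraMap R L) g _ dvd_rfl) ?_
  rw [injective_iff_map_eq_zero]
  intro a ha
  obtain ⟨h, rfl⟩ := AdjoinRoot.mk_surjective a
  rw [AdjoinRoot.mk_eq_zero, ← map_dvd_map _ hRL hg, ← AdjoinRoot.mk_eq_zero,
    ← AdjoinRoot.aeval_eq, aeval_def]
  simpa [AdjoinRoot.map, AdjoinRoot.lift_mk, ← eval₂_map] using ha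

theorem AdjoinRoot.etale_of_isUnit_derivative {R : Type*} [CommRing R] {f : R[X]} (hf : f.Monic)
    (hu : IsUnit (AdjoinRoot.mk f (derivative f))) : Algebra.Etale R (AdjoinRoot f) :=
  -- With `g = f'` the standard étale condition is trivial, and localizing away from the unit `f'`
  -- changes nothing.
  let P : StandardEtalePair R := ⟨f, hf, derivative f, ⟨1, 0, 1, by ring⟩⟩
  .of_equiv (P.equivAwayAdjoinRoot.trans
    ((IsLocalization.atUnit (AdjoinRoot f) _ _ hu).symm.restrictScalars R))

theorem AdjoinRoot.etale_X_pow_sub_C {R : Type*} [CommRing R] [Nontrivial R] {n : ℕ}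
    (hn : IsUnit (n : R)) (u : Rˣ) : Algebra.Etale R (AdjoinRoot (X ^ n - C (u : R))) := by
  have hn0 : n ≠ 0 := by rintro rfl; simp at hn
  refine etale_of_isUnit_derivative (monic_X_pow_sub_C _ hn0) ?_
  have hroot : root (X ^ n - C (u : R)) ^ n = of _ (u : R) := by
    have := mk_self (f := X ^ n - C (u : R))
    rwa [map_sub, map_pow, mk_X, mk_C, sub_eq_zero] at this
  have hroot_unit : IsUnit (root (X ^ n - C (u : R))) :=
    (isUnit_pow_iff hn0).mp (hroot ▸ u.isUnit.map _)
  rw [derivative_sub, derivative_C, sub_zero, derivative_X_pow, map_mul, mk_C, map_pow, mk_X]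
  exact (hn.map _).mul (hroot_unit.pow _)

theorem exists_nontrivial_etale_cover_of_nonconstant_unit_charZero_general
    (K : Type) [Field K] [IsAlgClosed K] [CharZero K]
    (B : Type) [CommRing B] [IsDomain B]
    [Algebra K B] [Algebra.FiniteType K B]
    (hnc : ∃ u : Bˣ, ∀ c : K, algebraMap K B c ≠ (u : B)) :
    ∃ n : ℕ, 2 ≤ n ∧ ∃ f : Bˣ,
      IsDomain (AdjoinRoot (X ^ n - C (f : B))) ∧
      Module.Finite B (AdjoinRoot (X ^ n - C (f : B))) ∧
      Algebra.FiniteType B (AdjoinRoot (X ^ n - C (f : B))) ∧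
      Algebra.FormallyEtale B (AdjoinRoot (X ^ n - C (f : B))) := by
  obtain ⟨u, hu⟩ := hnc
  have hBF := IsFractionRing.injective B (FractionRing B)
  have hv : Transcendental K (algebraMap B (FractionRing B) u) :=
    IsAlgClosed.transcendental_of_forall_algebraMap_ne fun c hc =>
      hu c (hBF (by rwa [← IsScalarTower.algebraMap_apply]))
  obtain ⟨N, hN⟩ := hv.exists_forall_prime_pow_ne
  obtain ⟨p, hpN, hp⟩ := Nat.exists_infinite_primes (N + 1)
  have hpB : IsUnit (p : B) := by
    simpa using (IsUnit.mk0 (p : K) (Nat.cast_ne_zero.mpr hp.ne_zero)).map (algebraMap K B)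
  have := AdjoinRoot.etale_X_pow_sub_C hpB u
  have hmonic := monic_X_pow_sub_C (u : B) hp.ne_zero
  refine ⟨p, hp.two_le, u, AdjoinRoot.isDomain_of_irreducible_map hBF hmonic ?_,
    hmonic.finite_adjoinRoot, inferInstance, inferInstance⟩
  simpa using X_pow_sub_C_irreducible_of_prime hp (hN p hp hpN)

/-- An integrally closed domain finitely generated over an algebraically closed field of
characteristic zero, with a nonconstant unit, admits a nontrivial connected finite étale
Kummer covering. -/
theorem exists_nontrivial_etale_cover_of_nonconstant_unit_charZero
    (K : Type) [Field K] [IsAlgClosed K] [CharZero K]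
    (B : Type) [CommRing B] [IsDomain B] [IsIntegrallyClosed B]
    [Algebra K B] [Algebra.FiniteType K B]
    (hnc : ∃ u : Bˣ, ∀ c : K, algebraMap K B c ≠ (u : B)) :
    ∃ n : ℕ, 2 ≤ n ∧ ∃ f : Bˣ,
      IsDomain (AdjoinRoot (X ^ n - C (f : B))) ∧
      Module.Finite B (AdjoinRoot (X ^ n - C (f : B))) ∧
      Algebra.FiniteType B (AdjoinRoot (X ^ n - C (f : B))) ∧
      Algebra.FormallyEtale B (AdjoinRoot (X ^ n - C (f : B))) :=
  exists_nontrivial_etale_cover_of_nonconstant_unit_charZero_general K B hnc
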